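/- If G is a finite connected simple graph with m edges such that EC(G) = m (equivalently, the singleton partition of the edge set of G is an ec-partition), then every path in G has length at most 6. -/

import Mathlib

open SimpleGraph

/-- Two edges (as unordered pairs of vertices) share an endpoint. -/
def SharesEndpoint {V : Type*} (e f : Sym2 V) : Prop := ∃ v, v ∈ e ∧ v ∈ f

/-- `D` is an edge dominating set of `G`: `D` consists of edges of `G` and every
edge of `G` outside `D` shares an endpoint with some edge of `D`. -/
def IsEdgeDominating {V : Type*} (G : SimpleGraph V) (D : Set (Sym2 V)) : Prop :=
  D ⊆ G.edgeSet ∧ ∀ e ∈ G.edgeSet \ D, ∃ f ∈ D, SharesEndpoint e f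

/-- Two disjoint edge sets form an edge coalition: neither is an edge dominating
set but their union is. -/
def IsEdgeCoalition {V : Type*} (G : SimpleGraph V) (E₁ E₂ : Set (Sym2 V)) : Prop :=
  Disjoint E₁ E₂ ∧ ¬ IsEdgeDominating G E₁ ∧ ¬ IsEdgeDominating G E₂ ∧
    IsEdgeDominating G (E₁ ∪ E₂)

/-- An ec-partition of `G`: a partition of the edge set of `G` (into nonempty,
pairwise disjoint parts) such that every part either is a singleton edge
dominating set, or is not an edge dominating set but forms an edge coalition
with another part. -/
def IsECPartition {V : Type*} (G : SimpleGraph V) (P : Set (Set (Sym2 V))) : Prop :=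
  (∀ A ∈ P, A.Nonempty) ∧
  P.Pairwise Disjoint ∧
  ⋃₀ P = G.edgeSet ∧
  ∀ A ∈ P, ((∃ e, A = {e}) ∧ IsEdgeDominating G A) ∨
    (¬ IsEdgeDominating G A ∧ ∃ B ∈ P, B ≠ A ∧ IsEdgeCoalition G A B)

/-- The edge coalition number `EC(G)`: the maximum number of parts over all
ec-partitions of `G`. -/
noncomputable def edgeCoalitionNumber {V : Type*} (G : SimpleGraph V) : ℕ :=
  sSup {k | ∃ P, IsECPartition G P ∧ P.ncard = k}

/-!
Since `EC(G) = m`, some ec-partition has as many parts as `G` has edges, so all its parts are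
singletons. The part `{e₀}` of the first edge of a long path either dominates on its own or
forms a coalition with some `{g}`; in both cases `{e₀, g}` dominates for some edge `g`. A path
of length at least `7` contains four pairwise vertex-disjoint edges `e₀, e₂, e₄, e₆`. None of
`e₂, e₄, e₆` meets `e₀`, so each of them meets `g`, which is impossible for an edge with only
two endpoints.
-/

theorem Set.ncard_le_ncard_of_pairwise_disjoint {α : Type*} {P : Set (Set α)} {T : Set α}
    (hT : T.Finite) (hP : P.Pairwise Disjoint) (hmeet : ∀ A ∈ P, (A ∩ T).Nonempty) :
    P.ncard ≤ T.ncard := by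
  have := hT.to_subtype
  choose x hxA hxT using hmeet
  let f : P → T := fun A => ⟨x A A.2, hxT A A.2⟩
  have hf : Function.Injective f := fun A B hAB =>
    Subtype.ext <| Set.PairwiseDisjoint.elim_set hP A.2 B.2 _ (hxA A A.2)
      (Subtype.mk.inj hAB ▸ hxA B B.2)
  simpa only [Nat.card_coe_set_eq] using Nat.card_le_card_of_injective f hf

theorem Set.ncard_lt_ncard_of_pairwise_disjoint {α : Type*} {P : Set (Set α)} {S A : Set α}
    (hS : S.Finite) (hP : P.Pairwise Disjoint) (hne : ∀ B ∈ P, B.Nonempty) (hPS : ⋃₀ P ⊆ S)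
    (hA : A ∈ P) (hnt : A.Nontrivial) : P.ncard < S.ncard := by
  obtain ⟨x, hx, y, hy, hxy⟩ := hnt
  have hmeet : ∀ B ∈ P, (B ∩ (S \ {y})).Nonempty := by
    intro B hB
    obtain ⟨z, hzB, hzy⟩ : ∃ z ∈ B, z ≠ y := by
      by_cases hBA : B = A
      · exact ⟨x, hBA ▸ hx, hxy⟩
      · obtain ⟨z, hz⟩ := hne B hB
        exact ⟨z, hz, fun hzy => Set.disjoint_left.mp (hP hB hA hBA) hz (hzy ▸ hy)⟩
    exact ⟨z, hzB, hPS ⟨B, hB, hzB⟩, hzy⟩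
  calc P.ncard ≤ (S \ {y}).ncard := Set.ncard_le_ncard_of_pairwise_disjoint hS.sdiff hP hmeet
    _ < S.ncard := Set.ncard_sdiff_singleton_lt_of_mem (hPS ⟨A, hA, hy⟩) hS

section EdgeDomination

variable {V : Type*} {G : SimpleGraph V}

theorem sharesEndpoint_self (e : Sym2 V) : SharesEndpoint e e :=
  ⟨e.out.1, e.out_fst_mem, e.out_fst_mem⟩

theorem IsEdgeDominating.exists_sharesEndpoint {D : Set (Sym2 V)} (hD : IsEdgeDominating G D)
    {e : Sym2 V} (he : e ∈ G.edgeSet) : ∃ f ∈ D, SharesEndpoint e f := by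
  by_cases heD : e ∈ D
  · exact ⟨e, heD, sharesEndpoint_self e⟩
  · exact hD.2 e ⟨he, heD⟩

theorem not_sharesEndpoint_of_sharesEndpoint_of_sharesEndpoint {e₁ e₂ e₃ g : Sym2 V}
    (h₁₂ : ¬ SharesEndpoint e₁ e₂) (h₁₃ : ¬ SharesEndpoint e₁ e₃) (h₂₃ : ¬ SharesEndpoint e₂ e₃)
    (h₁ : SharesEndpoint e₁ g) (h₂ : SharesEndpoint e₂ g) : ¬ SharesEndpoint e₃ g := by
  rintro ⟨v₃, hv₃, hv₃g⟩
  obtain ⟨v₁, hv₁, hv₁g⟩ := h₁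
  obtain ⟨v₂, hv₂, hv₂g⟩ := h₂
  have hv₁₂ : v₁ ≠ v₂ := fun h => h₁₂ ⟨v₁, hv₁, h ▸ hv₂⟩
  rw [(Sym2.mem_and_mem_iff hv₁₂).mp ⟨hv₁g, hv₂g⟩, Sym2.mem_iff] at hv₃g
  rcases hv₃g with rfl | rfl
  · exact h₁₃ ⟨v₃, hv₁, hv₃⟩
  · exact h₂₃ ⟨v₃, hv₂, hv₃⟩

theorem not_isEdgeDominating_pair {e : Fin 4 → Sym2 V} (he : ∀ i, e i ∈ G.edgeSet)
    (hdisj : Pairwise fun i j => ¬ SharesEndpoint (e i) (e j)) (g : Sym2 V) :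
    ¬ IsEdgeDominating G {e 0, g} := by
  intro hD
  have hg : ∀ i, i ≠ 0 → SharesEndpoint (e i) g := by
    intro i hi
    obtain ⟨f, hf, hef⟩ := hD.exists_sharesEndpoint (he i)
    rcases hf with rfl | rfl
    · exact absurd hef (hdisj hi)
    · exact hef
  exact not_sharesEndpoint_of_sharesEndpoint_of_sharesEndpoint (hdisj (by decide))
    (hdisj (by decide)) (hdisj (by decide)) (hg 1 (by decide)) (hg 2 (by decide))
    (hg 3 (by decide))

theorem SimpleGraph.Walk.IsPath.not_sharesEndpoint {u v : V} {p : G.Walk u v} (hp : p.IsPath)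
    {i j : ℕ} (hij : i + 1 < j ∨ j + 1 < i) (hi : i < p.length) (hj : j < p.length) :
    ¬ SharesEndpoint s(p.getVert i, p.getVert (i + 1)) s(p.getVert j, p.getVert (j + 1)) := by
  rintro ⟨x, hxi, hxj⟩
  have hinj {a b : ℕ} (ha : a ≤ p.length) (hb : b ≤ p.length) (h : p.getVert a = p.getVert b) :
      a = b :=
    hp.getVert_injOn ha hb h
  rw [Sym2.mem_iff] at hxi hxj
  rcases hxi with rfl | rfl <;> rcases hxj with h | h <;>
    have := hinj (by omega) (by omega) h <;> omega

end EdgeDomination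

namespace IsECPartition

variable {V : Type*} {G : SimpleGraph V} {P : Set (Set (Sym2 V))}

theorem ncard_le (hP : IsECPartition G P) (hfin : G.edgeSet.Finite) :
    P.ncard ≤ G.edgeSet.ncard :=
  Set.ncard_le_ncard_of_pairwise_disjoint hfin hP.2.1 fun A hA =>
    let ⟨e, he⟩ := hP.1 A hA
    ⟨e, he, hP.2.2.1 ▸ Set.mem_sUnion_of_mem he hA⟩

theorem subsingleton_of_ncard_eq (hP : IsECPartition G P) (hfin : G.edgeSet.Finite)
    (hcard : P.ncard = G.edgeSet.ncard) {A : Set (Sym2 V)} (hA : A ∈ P) : A.Subsingleton :=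
  Set.not_nontrivial_iff.mp fun hnt =>
    (Set.ncard_lt_ncard_of_pairwise_disjoint hfin hP.2.1 hP.1 hP.2.2.1.le hA hnt).ne hcard

theorem exists_isEdgeDominating_pair (hP : IsECPartition G P) (hfin : G.edgeSet.Finite)
    (hcard : P.ncard = G.edgeSet.ncard) {e : Sym2 V} (he : e ∈ G.edgeSet) :
    ∃ g, IsEdgeDominating G {e, g} := by
  obtain ⟨A, hA, heA⟩ : e ∈ ⋃₀ P := hP.2.2.1 ▸ he
  have hAe : A = {e} := (hP.subsingleton_of_ncard_eq hfin hcard hA).eq_singleton_of_mem heA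
  rcases hP.2.2.2 A hA with ⟨-, hdom⟩ | ⟨-, B, hB, -, -, -, -, hdom⟩
  · exact ⟨e, by rwa [Set.pair_eq_singleton, ← hAe]⟩
  · obtain ⟨g, hgB⟩ := hP.1 B hB
    have hBg : B = {g} := (hP.subsingleton_of_ncard_eq hfin hcard hB).eq_singleton_of_mem hgB
    exact ⟨g, by rwa [Set.insert_eq, ← hAe, ← hBg]⟩

end IsECPartition

theorem exists_isECPartition_ncard_eq {V : Type*} {G : SimpleGraph V}
    (hfin : G.edgeSet.Finite) (hne : G.edgeSet.Nonempty)
    (hec : edgeCoalitionNumber G = G.edgeSet.ncard) :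
    ∃ P, IsECPartition G P ∧ P.ncard = G.edgeSet.ncard := by
  have hbdd : BddAbove {k | ∃ P, IsECPartition G P ∧ P.ncard = k} := by
    refine ⟨G.edgeSet.ncard, ?_⟩
    rintro k ⟨P, hP, rfl⟩
    exact hP.ncard_le hfin
  have hnonempty : {k | ∃ P, IsECPartition G P ∧ P.ncard = k}.Nonempty := by
    by_contra h
    rw [Set.not_nonempty_iff_eq_empty] at h
    refine ((Set.ncard_pos hfin).mpr hne).ne' ?_
    rw [← hec, edgeCoalitionNumber, h, csSup_empty, Nat.bot_eq_zero]
  exact hec ▸ Nat.sSup_mem hnonempty hbdd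

theorem path_length_le_of_ec_eq_size_general {V : Type*} [Fintype V] (G : SimpleGraph V)
    (hec : edgeCoalitionNumber G = G.edgeSet.ncard) :
    ∀ (u v : V) (p : G.Walk u v), p.IsPath → p.length ≤ 6 := by
  intro u v p hp
  by_contra! hlen
  let e : Fin 4 → Sym2 V := fun i => s(p.getVert (2 * i), p.getVert (2 * i + 1))
  have he : ∀ i, e i ∈ G.edgeSet := fun i => p.adj_getVert_succ (by omega)
  have hdisj : Pairwise fun i j => ¬ SharesEndpoint (e i) (e j) := fun i j hij =>
    hp.not_sharesEndpoint (by omega) (by omega) (by omega)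
  obtain ⟨P, hP, hcard⟩ := exists_isECPartition_ncard_eq (Set.toFinite _) ⟨_, he 0⟩ hec
  obtain ⟨g, hg⟩ := hP.exists_isEdgeDominating_pair (Set.toFinite _) hcard (he 0)
  exact not_isEdgeDominating_pair he hdisj g hg

/-- If `G` is a finite connected simple graph with `m` edges and `EC(G) = m`,
then every path in `G` has length at most 6. -/
theorem path_length_le_of_ec_eq_size {V : Type*} [Fintype V] (G : SimpleGraph V)
    (hconn : G.Connected)
    (hec : edgeCoalitionNumber G = G.edgeSet.ncard) :
    ∀ (u v : V) (p : G.Walk u v), p.IsPath → p.length ≤ 6 :=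
  path_length_le_of_ec_eq_size_general G hec
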